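/- Let G be a numerical semigroup minimally generated by n₁ < n₂ < n₃ with α₁·n₁ = α₁₂·n₂ + α₁₃·n₃, where α₁ = min{α : α·n₁ ∈ ⟨n₂, n₃⟩} and α₁₂, α₁₃ ∈ ℕ₀. Let α₂ = min{α : α·n₂ ∈ ⟨n₁, n₃⟩} and α₃ = min{α : α·n₃ ∈ ⟨n₁, n₂⟩}. Then the element (α₂ − 1)n₂ + (α₁₃ − 1)n₃ belongs to the Apéry set Ap(G, n₁); that is, it cannot be written as a·n₁ + b·n₂ + c·n₃ with a, b, c ∈ ℕ₀ and a > 0. -/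

import Mathlib

/-- The numerical semigroup generated by `n1, n2, n3`. -/
def gen3 (n1 n2 n3 : ℕ) : Set ℕ :=
  {z | ∃ a b c : ℕ, a * n1 + b * n2 + c * n3 = z}

/-!
Suppose `x = (α₂ - 1)n₂ + (α₁₃ - 1)n₃` had a representation `a n₁ + b n₂ + c n₃` with `a > 0`.
Trading `α₂ n₂` for its expression in `n₁, n₃` we may take `b < α₂`; cancelling `b n₂` then
leaves `a n₁ + c n₃ = k n₂ + (α₁₃ - 1) n₃` with `k < α₂`. If `c ≥ α₁₃ - 1`, this writes `k n₂` as a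
positive element of `⟨n₁, n₃⟩`. Otherwise `a n₁ ∈ ⟨n₂, n₃⟩`, so `a ≥ α₁`, and subtracting the
relation `α₁ n₁ = α₁₂ n₂ + α₁₃ n₃` again writes some `m n₂` with `m ≤ k` as a positive element of
`⟨n₁, n₃⟩`. Either way the minimality of `α₂` is contradicted.
-/

section

variable {n1 n2 n3 α2 : ℕ}

theorem exists_add_mul_mod_eq_add_mul {a21 a23 : ℕ} (hrel2 : α2 * n2 = a21 * n1 + a23 * n3)
    (a b c : ℕ) :
    ∃ a' c', a ≤ a' ∧ a * n1 + b * n2 + c * n3 = a' * n1 + (b % α2) * n2 + c' * n3 := by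
  refine ⟨a + b / α2 * a21, c + b / α2 * a23, Nat.le_add_right _ _, ?_⟩
  conv_lhs => rw [← Nat.div_add_mod b α2]
  linear_combination (b / α2) * hrel2

theorem mul_ne_of_lt_of_isLeast
    (hα2 : IsLeast {α : ℕ | 0 < α ∧ ∃ a c : ℕ, α * n2 = a * n1 + c * n3} α2)
    {k a c : ℕ} (hk : k < α2) (hpos : 0 < a * n1 + c * n3) :
    k * n2 ≠ a * n1 + c * n3 := by
  intro h
  have hk0 : 0 < k := Nat.pos_of_ne_zero fun hk0 => by simp [hk0] at h; omega
  exact absurd (hα2.2 ⟨hk0, a, c, h⟩) (not_le.2 hk)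

theorem mul_ne_of_lt_of_isLeast_of_isLeast {α1 α12 α13 : ℕ}
    (hα1 : IsLeast {α : ℕ | 0 < α ∧ ∃ b c : ℕ, α * n1 = b * n2 + c * n3} α1)
    (hα2 : IsLeast {α : ℕ | 0 < α ∧ ∃ a c : ℕ, α * n2 = a * n1 + c * n3} α2)
    (hrel : α1 * n1 = α12 * n2 + α13 * n3) (hn3 : 0 < n3)
    {a k e : ℕ} (ha : 0 < a) (hk : k < α2) (he : e < α13) :
    a * n1 ≠ k * n2 + e * n3 := by
  intro h
  obtain ⟨s, rfl⟩ := Nat.exists_eq_add_of_le (hα1.2 ⟨ha, k, e, h⟩)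
  obtain ⟨f, rfl⟩ := Nat.exists_eq_add_of_lt he
  have hsub : s * n1 + α12 * n2 + (f + 1) * n3 + e * n3 = k * n2 + e * n3 := by
    linear_combination h - hrel
  obtain ⟨m, rfl⟩ : ∃ m, k = α12 + m := by
    refine Nat.exists_eq_add_of_le (le_of_not_gt fun hlt => ?_)
    nlinarith [Nat.mul_le_mul_right n2 hlt.le]
  refine mul_ne_of_lt_of_isLeast (k := m) hα2 (by omega)
    (by positivity : 0 < s * n1 + (f + 1) * n3) ?_
  linear_combination hsub.symm

end

theorem stmt_8 (n1 n2 n3 : ℕ) (h1 : 0 < n1) (h23 : n2 < n3)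
    (α1 α2 α12 α13 : ℕ)
    (hα1 : IsLeast {α : ℕ | 0 < α ∧ ∃ b c : ℕ, α * n1 = b * n2 + c * n3} α1)
    (hα2 : IsLeast {α : ℕ | 0 < α ∧ ∃ a c : ℕ, α * n2 = a * n1 + c * n3} α2)
    (hrel : α1 * n1 = α12 * n2 + α13 * n3) :
    ((α2 - 1) * n2 + (α13 - 1) * n3 ∈ gen3 n1 n2 n3) ∧
      ¬ ∃ a b c : ℕ, 0 < a ∧
        a * n1 + b * n2 + c * n3 = (α2 - 1) * n2 + (α13 - 1) * n3 := by
  refine ⟨⟨0, α2 - 1, α13 - 1, by ring⟩, ?_⟩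
  rintro ⟨a, b, c, ha, heq⟩
  obtain ⟨a21, a23, hrel2⟩ := hα2.1.2
  obtain ⟨a', c', haa', hred⟩ := exists_add_mul_mod_eq_add_mul hrel2 a b c
  have hα2pos : 0 < α2 := hα2.1.1
  obtain ⟨k, hk⟩ := Nat.exists_eq_add_of_le (Nat.le_sub_one_of_lt (Nat.mod_lt b hα2pos))
  have hkα2 : k < α2 := by omega
  rw [hk, hred] at heq
  rcases le_or_gt (α13 - 1) c' with hc | hc
  · obtain ⟨d, hd⟩ := Nat.exists_eq_add_of_le hc
    refine mul_ne_of_lt_of_isLeast (k := k) hα2 hkα2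
      (by positivity [Nat.lt_of_lt_of_le ha haa'] : 0 < a' * n1 + d * n3) ?_
    rw [hd] at heq
    linear_combination heq.symm
  · obtain ⟨e, he⟩ := Nat.exists_eq_add_of_lt hc
    refine mul_ne_of_lt_of_isLeast_of_isLeast (a := a') (e := e + 1) hα1 hα2 hrel (by omega)
      (by omega) hkα2 (by omega) ?_
    rw [he] at heq
    linear_combination heq
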